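/- Let p be a prime, n ≥ 1, d₀ = p^n − 1, D = {1 ≤ i ≤ p^n − 1 : gcd(i,p) = 1}. Suppose U = (u_d)_{d∈D} ∈ E_{D,p}(m) satisfies Σ_d s_p(u_d)/(m(p−1)) = 1/(n(p−1)) (i.e. U is minimal). Then n divides m, say m = nt, and u_d = 0 for all d ≠ d₀, and u_{d₀} = p^i·(p^{nt} − 1)/(p^n − 1) for some 0 ≤ i ≤ n − 1. -/

import Mathlib

/-!
Digit sums are subadditive and submultiplicative, and a positive multiple of `p ^ m - 1` has digit
sum at least `m (p - 1)`. Every `d ∈ D` has `s_p(d) ≤ n (p - 1)`, with equality only for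
`d₀ = p ^ n - 1`, so
`m (p - 1) ≤ s_p(∑ u_d d) ≤ ∑ s_p(u_d) s_p(d) ≤ n (p - 1) ∑ s_p(u_d) = m (p - 1)`,
and minimality forces `u_d = 0` for `d ≠ d₀` and `m = n t` with `t = s_p(u_{d₀})`.
Then `u_{d₀} = k (p ^ (n t) - 1) / (p ^ n - 1)` with `k < p ^ n`; the quotient is the geometric
sum `∑_{j < t} p ^ (n j)`, so the base-`p` expansion of `u_{d₀}` is `t` copies of that of `k`.
Hence `t s_p(k) = t`, `s_p(k) = 1` and `k` is a power of `p`.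
-/

/-- `sp p n` is the sum of the base-`p` digits of `n`. -/
def sp (p n : ℕ) : ℕ := (Nat.digits p n).sum

section DigitSum

variable {p : ℕ}

lemma exists_eq_mul_add_of_lt (hp : 0 < p) (a : ℕ) :
    ∃ a₁ a₀, a₀ < p ∧ a = a₁ * p + a₀ :=
  ⟨a / p, a % p, Nat.mod_lt a hp, (Nat.div_add_mod' a p).symm⟩

@[simp]
lemma sp_zero (p : ℕ) : sp p 0 = 0 := by simp [sp]

lemma sp_mul_add (hp : 1 < p) (q : ℕ) {r : ℕ} (hr : r < p) : sp p (q * p + r) = sp p q + r := by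
  rcases eq_or_ne r 0 with rfl | hr0
  · rcases eq_or_ne q 0 with rfl | hq0
    · simp
    · rw [sp, add_zero, mul_comm, ← zero_add (p * q),
        Nat.digits_add p hp 0 q (by omega) (.inr hq0)]
      simp [sp]
  · rw [sp, mul_comm, add_comm, Nat.digits_add p hp r q hr (.inl hr0), List.sum_cons, add_comm]
    rfl

lemma sp_eq_sp_div_add_mod (hp : 1 < p) (N : ℕ) : sp p N = sp p (N / p) + N % p := by
  conv_lhs => rw [← Nat.div_add_mod' N p]
  exact sp_mul_add hp _ (Nat.mod_lt _ (by omega))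

lemma sp_of_lt (hp : 1 < p) {N : ℕ} (hN : N < p) : sp p N = N := by
  simpa using sp_mul_add hp 0 hN

lemma sp_mul_base (hp : 1 < p) (x : ℕ) : sp p (x * p) = sp p x := by
  simpa using sp_mul_add hp x (r := 0) (by omega)

lemma sp_mul_pow_add (hp : 1 < p) (k q : ℕ) {r : ℕ} (hr : r < p ^ k) :
    sp p (q * p ^ k + r) = sp p q + sp p r := by
  induction k generalizing r with
  | zero => simp_all
  | succ k ih =>
    have hp0 : 0 < p := by omega
    have hr' : r / p < p ^ k := by rwa [Nat.div_lt_iff_lt_mul hp0, ← pow_succ]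
    have hshift : q * p ^ (k + 1) + r = (q * p ^ k + r / p) * p + r % p := by
      rw [pow_succ, add_mul, mul_assoc, add_assoc, Nat.div_add_mod']
    rw [hshift, sp_mul_add hp _ (Nat.mod_lt r hp0), ih hr', sp_eq_sp_div_add_mod hp r, add_assoc]

lemma sp_pos (hp : 1 < p) {N : ℕ} (hN : 0 < N) : 0 < sp p N := by
  induction N using Nat.strong_induction_on with
  | _ N ih =>
    rw [sp_eq_sp_div_add_mod hp N]
    rcases (N % p).eq_zero_or_pos with hmod | hmod
    · have hdiv : 0 < N / p := Nat.div_pos (Nat.le_of_mod_lt (by omega)) (by omega)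
      have := ih (N / p) (Nat.div_lt_self hN hp) hdiv
      omega
    · omega

lemma sp_add_le (hp : 1 < p) (a b : ℕ) : sp p (a + b) ≤ sp p a + sp p b := by
  induction h : a + b using Nat.strong_induction_on generalizing a b with
  | _ N ih =>
    subst h
    rcases (a + b).eq_zero_or_pos with hab | hab
    · simp_all
    have hp0 : 0 < p := by omega
    obtain ⟨a₁, a₀, ha₀, rfl⟩ := exists_eq_mul_add_of_lt hp0 a
    obtain ⟨b₁, b₀, hb₀, rfl⟩ := exists_eq_mul_add_of_lt hp0 b
    have hle : 2 * (a₁ + b₁) ≤ a₁ * p + b₁ * p := by nlinarith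
    rw [sp_mul_add hp _ ha₀, sp_mul_add hp _ hb₀]
    by_cases hc : a₀ + b₀ < p
    · have := ih _ (by omega) a₁ b₁ rfl
      rw [show a₁ * p + a₀ + (b₁ * p + b₀) = (a₁ + b₁) * p + (a₀ + b₀) by ring,
        sp_mul_add hp _ hc]
      omega
    · have h1 := ih _ (by omega) (a₁ + b₁) 1 rfl
      have h2 := ih _ (by omega) a₁ b₁ rfl
      rw [sp_of_lt hp hp] at h1
      rw [show a₁ * p + a₀ + (b₁ * p + b₀) = (a₁ + b₁ + 1) * p + (a₀ + b₀ - p) by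
        rw [add_mul, one_mul, add_mul]; omega, sp_mul_add hp _ (by omega)]
      omega

lemma sp_sum_le (hp : 1 < p) {ι : Type*} (s : Finset ι) (f : ι → ℕ) :
    sp p (∑ i ∈ s, f i) ≤ ∑ i ∈ s, sp p (f i) :=
  Finset.le_sum_of_subadditive _ (sp_zero p).le (sp_add_le hp) s f

lemma sp_nsmul_le (hp : 1 < p) (c b : ℕ) : sp p (c * b) ≤ c * sp p b := by
  simpa using sp_sum_le hp (Finset.range c) fun _ => b

lemma sp_mul_le (hp : 1 < p) (a b : ℕ) : sp p (a * b) ≤ sp p a * sp p b := by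
  induction a using Nat.strong_induction_on with
  | _ a ih =>
    rcases a.eq_zero_or_pos with rfl | ha
    · simp
    obtain ⟨a₁, a₀, ha₀, rfl⟩ := exists_eq_mul_add_of_lt (by omega : 0 < p) a
    have ha₁ : a₁ < a₁ * p + a₀ := by nlinarith
    calc sp p ((a₁ * p + a₀) * b) = sp p ((a₁ * b) * p + a₀ * b) := by ring_nf
      _ ≤ sp p (a₁ * b) + sp p (a₀ * b) := by
          grw [sp_add_le hp, sp_mul_base hp]
      _ ≤ sp p a₁ * sp p b + a₀ * sp p b := add_le_add (ih a₁ ha₁) (sp_nsmul_le hp a₀ b)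
      _ = sp p (a₁ * p + a₀) * sp p b := by rw [sp_mul_add hp _ ha₀, add_mul]

lemma sp_pow_sub_one (hp : 1 < p) (k : ℕ) : sp p (p ^ k - 1) = k * (p - 1) := by
  induction k with
  | zero => simp
  | succ k ih =>
    have hpk : 0 < p ^ k := by positivity
    have hsplit : p ^ (k + 1) - 1 = (p ^ k - 1) * p + (p - 1) := by
      rw [pow_succ, Nat.sub_mul, one_mul]
      have : p ≤ p ^ k * p := Nat.le_mul_of_pos_left p hpk
      omega
    rw [hsplit, sp_mul_add hp _ (by omega), ih, add_mul, one_mul]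

lemma sp_le_of_lt_pow (hp : 1 < p) {k N : ℕ} (hN : N < p ^ k) : sp p N ≤ k * (p - 1) := by
  induction k generalizing N with
  | zero => simp_all
  | succ k ih =>
    obtain ⟨N₁, N₀, hN₀, rfl⟩ := exists_eq_mul_add_of_lt (by omega : 0 < p) N
    have hN₁ : N₁ < p ^ k := by rw [pow_succ] at hN; nlinarith
    rw [sp_mul_add hp _ hN₀, add_mul, one_mul]
    have := ih hN₁
    omega

lemma eq_pow_sub_one_of_sp_eq (hp : 1 < p) {k N : ℕ} (hN : N < p ^ k)
    (h : sp p N = k * (p - 1)) : N = p ^ k - 1 := by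
  induction k generalizing N with
  | zero => simp_all
  | succ k ih =>
    obtain ⟨N₁, N₀, hN₀, rfl⟩ := exists_eq_mul_add_of_lt (by omega : 0 < p) N
    have hN₁ : N₁ < p ^ k := by rw [pow_succ] at hN; nlinarith
    rw [sp_mul_add hp _ hN₀, add_mul, one_mul] at h
    have := sp_le_of_lt_pow hp hN₁
    rw [ih hN₁ (by omega), show N₀ = p - 1 by omega, pow_succ, Nat.sub_mul, one_mul]
    have : p ≤ p ^ k * p := Nat.le_mul_of_pos_left p (by positivity)
    omega

lemma le_sp_of_pow_sub_one_dvd (hp : 1 < p) (m : ℕ) {N : ℕ} (hN : 0 < N)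
    (hdvd : p ^ m - 1 ∣ N) :
    m * (p - 1) ≤ sp p N := by
  rcases m.eq_zero_or_pos with rfl | hm
  · simp
  have hpm : 1 < p ^ m := Nat.one_lt_pow hm.ne' hp
  induction N using Nat.strong_induction_on with
  | _ N ih =>
    rcases Nat.lt_or_ge N (p ^ m) with hlt | hge
    · obtain ⟨c, rfl⟩ := hdvd
      rcases c with _ | _ | c
      · simp at hN
      · simp [sp_pow_sub_one hp]
      · have : (p ^ m - 1) * 2 ≤ (p ^ m - 1) * (c + 1 + 1) := Nat.mul_le_mul_left _ (by omega)
        omega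
    -- As `p ^ m ≡ 1`, folding the top digits `q` onto the bottom ones `r` preserves `N`
    -- modulo `p ^ m - 1` and does not increase the digit sum.
    · obtain ⟨q, r, hr, rfl⟩ := exists_eq_mul_add_of_lt (by omega : 0 < p ^ m) N
      have hq : 0 < q := by nlinarith
      have hfold : q * p ^ m + r = q * (p ^ m - 1) + (q + r) := by
        rw [Nat.mul_sub, mul_one]
        have : q ≤ q * p ^ m := Nat.le_mul_of_pos_right q (by omega)
        omega
      rw [hfold] at hdvd
      have hqr : q + r < q * p ^ m + r := by
        have : 0 < q * (p ^ m - 1) := Nat.mul_pos hq (by omega)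
        omega
      calc m * (p - 1) ≤ sp p (q + r) :=
            ih _ hqr (by omega) ((Nat.dvd_add_right (dvd_mul_left _ q)).mp hdvd)
        _ ≤ sp p q + sp p r := sp_add_le hp q r
        _ = sp p (q * p ^ m + r) := (sp_mul_pow_add hp m q hr).symm

lemma eq_pow_of_sp_eq_one (hp : 1 < p) {k : ℕ} (hk : sp p k = 1) : ∃ i, k = p ^ i := by
  induction k using Nat.strong_induction_on with
  | _ k ih =>
    obtain ⟨k₁, k₀, hk₀, rfl⟩ := exists_eq_mul_add_of_lt (by omega : 0 < p) k
    rw [sp_mul_add hp _ hk₀] at hk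
    rcases k₁.eq_zero_or_pos with rfl | hk₁
    · exact ⟨0, by simp_all⟩
    have := sp_pos hp hk₁
    obtain ⟨i, rfl⟩ := ih k₁ (by nlinarith) (by omega)
    exact ⟨i + 1, by rw [pow_succ, show k₀ = 0 by omega, add_zero]⟩

lemma sp_geom_sum_mul (hp : 1 < p) {n k : ℕ} (hk : k < p ^ n) (t : ℕ) :
    sp p ((∑ j ∈ Finset.range t, (p ^ n) ^ j) * k) = t * sp p k := by
  induction t with
  | zero => simp
  | succ t ih =>
    have hshift : (∑ j ∈ Finset.range (t + 1), (p ^ n) ^ j) * k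
        = (∑ j ∈ Finset.range t, (p ^ n) ^ j) * k * p ^ n + k := by
      rw [geom_sum_succ]; ring
    rw [hshift, sp_mul_pow_add hp n _ hk, ih, add_mul, one_mul]

end DigitSum

lemma le_sum_sp_mul_sp {p m : ℕ} (hp : 1 < p) {ι : Type*} (s : Finset ι) (u w : ι → ℕ)
    (hdvd : p ^ m - 1 ∣ ∑ i ∈ s, u i * w i) (hpos : 0 < ∑ i ∈ s, u i * w i) :
    m * (p - 1) ≤ ∑ i ∈ s, sp p (u i) * sp p (w i) :=
  calc m * (p - 1) ≤ sp p (∑ i ∈ s, u i * w i) := le_sp_of_pow_sub_one_dvd hp m hpos hdvd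
    _ ≤ ∑ i ∈ s, sp p (u i * w i) := sp_sum_le hp s _
    _ ≤ ∑ i ∈ s, sp p (u i) * sp p (w i) := Finset.sum_le_sum fun _ _ => sp_mul_le hp _ _

lemma exists_eq_pow_mul_of_sp_eq {p n t u : ℕ} (hp : 1 < p)
    (hdvd : p ^ (n * t) - 1 ∣ u * (p ^ n - 1)) (hu : u ≤ p ^ (n * t) - 1) (hsp : sp p u = t)
    (hu₀ : 0 < u) : ∃ i < n, u = p ^ i * ((p ^ (n * t) - 1) / (p ^ n - 1)) := by
  have hn : n ≠ 0 := by rintro rfl; simp at hu; omega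
  have hpn : 1 < p ^ n := Nat.one_lt_pow hn hp
  have hq : 0 < p ^ n - 1 := Nat.sub_pos_of_lt hpn
  set v := ∑ j ∈ Finset.range t, (p ^ n) ^ j
  have hv : p ^ (n * t) - 1 = v * (p ^ n - 1) := by
    have := geom_sum_mul_add (p ^ n - 1) t
    rw [Nat.sub_add_cancel hpn.le] at this
    rw [pow_mul, ← this, Nat.add_sub_cancel]
  obtain ⟨k, rfl⟩ : v ∣ u := Nat.dvd_of_mul_dvd_mul_right hq (hv ▸ hdvd)
  have hk : k < p ^ n := by
    rw [hv] at hu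
    have := Nat.le_of_mul_le_mul_left hu (Nat.pos_of_mul_pos_right hu₀)
    omega
  have ht : 0 < t := hsp ▸ sp_pos hp hu₀
  rw [sp_geom_sum_mul hp hk] at hsp
  obtain ⟨i, rfl⟩ :=
    eq_pow_of_sp_eq_one hp (Nat.eq_of_mul_eq_mul_left ht (hsp.trans (mul_one t).symm))
  refine ⟨i, (Nat.pow_lt_pow_iff_right hp).mp hk, ?_⟩
  rw [hv, Nat.mul_div_cancel _ hq, mul_comm]

lemma coprime_pow_sub_one {p n : ℕ} (hp : 0 < p) (hn : n ≠ 0) : Nat.Coprime (p ^ n - 1) p :=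
  ((Nat.coprime_self_sub_left (Nat.one_le_pow _ _ hp)).2 (Nat.coprime_one_left _)).coprime_dvd_right
    (dvd_pow_self p hn)

lemma eq_zero_of_ne_pow_sub_one_of_minimal {p n m : ℕ} (hp : 1 < p) (s : Finset ℕ)
    (u : ℕ → ℕ) (hs : ∀ d ∈ s, d < p ^ n) (hdvd : p ^ m - 1 ∣ ∑ d ∈ s, u d * d)
    (hpos : 0 < ∑ d ∈ s, u d * d)
    (hmin : n * ∑ d ∈ s, sp p (u d) = m) : ∀ d ∈ s, d ≠ p ^ n - 1 → u d = 0 := by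
  have hbound : ∀ d ∈ s, sp p (u d) * sp p d ≤ sp p (u d) * (n * (p - 1)) := fun d hd =>
    Nat.mul_le_mul_left _ (sp_le_of_lt_pow hp (hs d hd))
  have htight : ∀ d ∈ s, sp p (u d) * sp p d = sp p (u d) * (n * (p - 1)) := by
    refine (Finset.sum_eq_sum_iff_of_le hbound).mp (le_antisymm (Finset.sum_le_sum hbound) ?_)
    calc ∑ d ∈ s, sp p (u d) * (n * (p - 1)) = m * (p - 1) := by
          rw [← Finset.sum_mul, ← hmin]; ring
      _ ≤ _ := le_sum_sp_mul_sp hp s u (fun d => d) hdvd hpos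
  intro d hd hne
  by_contra hud
  exact hne (eq_pow_sub_one_of_sp_eq hp (hs d hd)
    (Nat.eq_of_mul_eq_mul_left (sp_pos hp (Nat.pos_of_ne_zero hud)) (htight d hd)))

theorem stmt_8_general (p : ℕ) (hp : p.Prime) (n : ℕ) (hn : 0 < n)
    (D : Finset ℕ) (hD : D = (Finset.Icc 1 (p ^ n - 1)).filter fun i => Nat.gcd i p = 1)
    (m : ℕ) (u : ℕ → ℕ)
    (hbd : ∀ d ∈ D, u d ≤ p ^ m - 1)
    (hdvd : (p ^ m - 1) ∣ (∑ d ∈ D, u d * d)) (hpos : 0 < ∑ d ∈ D, u d * d)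
    (hmin : n * ∑ d ∈ D, sp p (u d) = m) :
    ∃ t : ℕ, 0 < t ∧ m = n * t ∧
      (∀ d ∈ D, d ≠ p ^ n - 1 → u d = 0) ∧
      ∃ i < n, u (p ^ n - 1) = p ^ i * ((p ^ (n * t) - 1) / (p ^ n - 1)) := by
  have hp1 := hp.one_lt
  have hDlt : ∀ d ∈ D, d < p ^ n := fun d hd => by
    rw [hD, Finset.mem_filter, Finset.mem_Icc] at hd; omega
  have hzero := eq_zero_of_ne_pow_sub_one_of_minimal hp1 D u hDlt hdvd hpos hmin
  set d₀ := p ^ n - 1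
  have hd₀ : d₀ ∈ D := by
    rw [hD, Finset.mem_filter, Finset.mem_Icc]
    exact ⟨⟨Nat.sub_pos_of_lt (Nat.one_lt_pow hn.ne' hp1), le_rfl⟩,
      coprime_pow_sub_one hp.pos hn.ne'⟩
  have hS : ∑ d ∈ D, u d * d = u d₀ * d₀ :=
    Finset.sum_eq_single_of_mem _ hd₀ fun d hd hne => by simp [hzero d hd hne]
  have hT : ∑ d ∈ D, sp p (u d) = sp p (u d₀) :=
    Finset.sum_eq_single_of_mem _ hd₀ fun d hd hne => by simp [hzero d hd hne]
  have hu₀ : 0 < u d₀ := Nat.pos_of_mul_pos_right (hS ▸ hpos)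
  have hmt : m = n * sp p (u d₀) := by rw [← hmin, hT]
  refine ⟨sp p (u d₀), sp_pos hp1 hu₀, hmt, hzero, ?_⟩
  rw [hS, hmt] at hdvd
  exact exists_eq_pow_mul_of_sp_eq hp1 hdvd (hmt ▸ hbd d₀ hd₀) rfl hu₀

/-- Minimal elements of `E_{D,p}(m)` for `D = {1 ≤ i ≤ p^n − 1 : gcd(i,p)=1}`:
if `U = (u_d) ∈ E_{D,p}(m)` has `∑ s_p(u_d) = m/n` (i.e. density `1/(n(p−1))`), then
`n ∣ m`, `u_d = 0` for `d ≠ p^n − 1`, and `u_{p^n−1} = p^i (p^m − 1)/(p^n − 1)`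
for some `0 ≤ i ≤ n − 1`. -/
theorem stmt_8 (p : ℕ) (hp : p.Prime) (n : ℕ) (hn : 0 < n)
    (D : Finset ℕ) (hD : D = (Finset.Icc 1 (p ^ n - 1)).filter fun i => Nat.gcd i p = 1)
    (m : ℕ) (hm : 0 < m) (u : ℕ → ℕ)
    (hbd : ∀ d ∈ D, u d ≤ p ^ m - 1)
    (hdvd : (p ^ m - 1) ∣ (∑ d ∈ D, u d * d)) (hpos : 0 < ∑ d ∈ D, u d * d)
    (hmin : n * ∑ d ∈ D, sp p (u d) = m) :
    ∃ t : ℕ, 0 < t ∧ m = n * t ∧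
      (∀ d ∈ D, d ≠ p ^ n - 1 → u d = 0) ∧
      ∃ i < n, u (p ^ n - 1) = p ^ i * ((p ^ (n * t) - 1) / (p ^ n - 1)) :=
  stmt_8_general p hp n hn D hD m u hbd hdvd hpos hmin
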